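/- Consider the cubic Kolmogorov system ẋ₁ = x₁(r₁ + Σᵢ aᵢxᵢ + Σ_{1≤i≤j≤3} a_{ij}xᵢxⱼ), ẋ₂ = x₂(r₂ + Σᵢ bᵢxᵢ + Σ_{1≤i≤j≤3} b_{ij}xᵢxⱼ), ẋ₃ = x₃(r₃ + Σᵢ cᵢxᵢ + Σ_{1≤i≤j≤3} c_{ij}xᵢxⱼ) with real coefficients. There exists a NONZERO polynomial K(x₁,x₂,x₃) such that 2x₁²(r₁ + Σᵢaᵢxᵢ + Σa_{ij}xᵢxⱼ) + 2x₂²(r₂ + Σᵢbᵢxᵢ + Σb_{ij}xᵢxⱼ) + 2x₃²(r₃ + Σᵢcᵢxᵢ + Σc_{ij}xᵢxⱼ) = (x₁²+x₂²+x₃²−1)·K (i.e., S² is an isolated invariant sphere) if and only if both r₁² + r₂² + r₃² ≠ 0 and the conditions: aᵢ = bᵢ = cᵢ = 0 for i = 1,2,3; a_{ij} = b_{ij} = c_{ij} = 0 for i ≠ j; a₁₁ = −r₁, a₂₂ = −(r₁+r₂+b₁₁), b₂₂ = −r₂, b₃₃ = −(r₂+r₃+c₂₂), c₁₁ = −(r₁+r₃+a₃₃),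 c₃₃ = −r₃ hold. -/

import Mathlib

open MvPolynomial

/-- The general quadratic polynomial
`r + a₁x₁ + a₂x₂ + a₃x₃ + a₁₁x₁² + a₁₂x₁x₂ + a₁₃x₁x₃ + a₂₂x₂² + a₂₃x₂x₃ + a₃₃x₃²`. -/
noncomputable def quadG (r a₁ a₂ a₃ a₁₁ a₁₂ a₁₃ a₂₂ a₂₃ a₃₃ : ℝ) :
    MvPolynomial (Fin 3) ℝ :=
  C r + C a₁ * X 0 + C a₂ * X 1 + C a₃ * X 2
    + C a₁₁ * X 0 ^ 2 + C a₁₂ * X 0 * X 1 + C a₁₃ * X 0 * X 2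
    + C a₂₂ * X 1 ^ 2 + C a₂₃ * X 1 * X 2 + C a₃₃ * X 2 ^ 2

/-- `sphereInvariance G₁ G₂ G₃ K` says that the unit sphere `x₁²+x₂²+x₃² = 1` is a Darboux
(invariant) surface of the Kolmogorov system `ẋᵢ = xᵢGᵢ` with cofactor `K`, i.e.
`Σᵢ 2xᵢ²Gᵢ = (x₁²+x₂²+x₃²−1)·K`. -/
def sphereInvariance (G₁ G₂ G₃ K : MvPolynomial (Fin 3) ℝ) : Prop :=
  2 * X 0 ^ 2 * G₁ + 2 * X 1 ^ 2 * G₂ + 2 * X 2 ^ 2 * G₃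
    = (X 0 ^ 2 + X 1 ^ 2 + X 2 ^ 2 - 1) * K

/-!
Split `Σ xᵢ²Gᵢ = p₂ + p₃ + p₄` into its homogeneous parts: `p₂ = Σ rᵢxᵢ²`, `p₃ = cubicPart`,
`p₄ = quarticPart`. Invariance of the sphere makes this sum vanish on `S²`; evaluating at `x` and
`-x` separates `p₃` from `p₂ + p₄`, and rescaling by homogeneity gives `p₃ = 0` and
`p₄ = -|x|²p₂` on all of `ℝ³`. Comparing coefficients turns these two identities into the stated
conditions. Conversely, under those conditions `Σ 2xᵢ²Gᵢ = (|x|² - 1)·(-2p₂)`, and since the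
cofactor is unique it is nonzero exactly when some `rᵢ ≠ 0`.
-/

section Homogeneous

variable {E : Type*} [NormedAddCommGroup E] [NormedSpace ℝ E]

def IsHomogeneousFunction (k : ℕ) (p : E → ℝ) : Prop :=
  ∀ (t : ℝ) (x : E), p (t • x) = t ^ k * p x

namespace IsHomogeneousFunction

variable {k : ℕ} {p q : E → ℝ}

lemma map_zero (hp : IsHomogeneousFunction k p) (hk : k ≠ 0) : p 0 = 0 := by
  simpa [zero_pow hk] using hp 0 0

lemma map_neg (hp : IsHomogeneousFunction k p) (x : E) : p (-x) = (-1) ^ k * p x := by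
  rw [← hp, neg_one_smul]

lemma eq_of_eqOn_unit_sphere (hp : IsHomogeneousFunction k p) (hq : IsHomogeneousFunction k q)
    (hk : k ≠ 0) (h : ∀ x, ‖x‖ = 1 → p x = q x) : p = q := by
  funext x
  rcases eq_or_ne x 0 with rfl | hx
  · rw [hp.map_zero hk, hq.map_zero hk]
  · rw [← smul_inv_smul₀ (norm_ne_zero_iff.mpr hx) x, hp, hq,
      h _ (by simpa using norm_smul_inv_norm (𝕜 := ℝ) hx)]

end IsHomogeneousFunction

theorem eq_zero_and_eq_of_sum_eq_zero_on_unit_sphere {p₂ p₃ p₄ : E → ℝ}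
    (h₂ : IsHomogeneousFunction 2 p₂) (h₃ : IsHomogeneousFunction 3 p₃)
    (h₄ : IsHomogeneousFunction 4 p₄) (h : ∀ x, ‖x‖ = 1 → p₂ x + p₃ x + p₄ x = 0) :
    p₃ = 0 ∧ p₄ = fun x ↦ -(‖x‖ ^ 2 * p₂ x) := by
  have h_neg : ∀ x, ‖x‖ = 1 → p₂ x - p₃ x + p₄ x = 0 := fun x hx ↦ by
    have := h (-x) (by rwa [norm_neg])
    rw [h₂.map_neg, h₃.map_neg, h₄.map_neg] at this
    linear_combination this
  constructor
  · refine h₃.eq_of_eqOn_unit_sphere (fun t x ↦ by simp) three_ne_zero fun x hx ↦ ?_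
    rw [Pi.zero_apply]
    linear_combination (h x hx - h_neg x hx) / 2
  · refine h₄.eq_of_eqOn_unit_sphere (fun t x ↦ ?_) four_ne_zero fun x hx ↦ ?_
    · rw [h₂, norm_smul, Real.norm_eq_abs, mul_pow, sq_abs]
      ring
    · rw [hx]
      linear_combination (h x hx + h_neg x hx) / 2

end Homogeneous

def cubicPart (a₁ a₂ a₃ b₁ b₂ b₃ c₁ c₂ c₃ u v w : ℝ) : ℝ :=
  u ^ 2 * (a₁ * u + a₂ * v + a₃ * w) + v ^ 2 * (b₁ * u + b₂ * v + b₃ * w)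
    + w ^ 2 * (c₁ * u + c₂ * v + c₃ * w)

def quarticPart (a₁₁ a₁₂ a₁₃ a₂₂ a₂₃ a₃₃ b₁₁ b₁₂ b₁₃ b₂₂ b₂₃ b₃₃ c₁₁ c₁₂ c₁₃ c₂₂ c₂₃ c₃₃ u v w : ℝ) :
    ℝ :=
  u ^ 2 * (a₁₁ * u ^ 2 + a₁₂ * u * v + a₁₃ * u * w + a₂₂ * v ^ 2 + a₂₃ * v * w + a₃₃ * w ^ 2)
    + v ^ 2 * (b₁₁ * u ^ 2 + b₁₂ * u * v + b₁₃ * u * w + b₂₂ * v ^ 2 + b₂₃ * v * w + b₃₃ * w ^ 2)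
    + w ^ 2 * (c₁₁ * u ^ 2 + c₁₂ * u * v + c₁₃ * u * w + c₂₂ * v ^ 2 + c₂₃ * v * w + c₃₃ * w ^ 2)

theorem cubicPart_coeffs_eq_zero {a₁ a₂ a₃ b₁ b₂ b₃ c₁ c₂ c₃ : ℝ}
    (h : ∀ u v w, cubicPart a₁ a₂ a₃ b₁ b₂ b₃ c₁ c₂ c₃ u v w = 0) :
    a₁ = 0 ∧ a₂ = 0 ∧ a₃ = 0 ∧ b₁ = 0 ∧ b₂ = 0 ∧ b₃ = 0 ∧ c₁ = 0 ∧ c₂ = 0 ∧ c₃ = 0 := by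
  simp only [cubicPart] at h
  have := h 1 0 0; have := h 0 1 0; have := h 0 0 1
  have := h 1 1 0; have := h 1 (-1) 0; have := h 1 0 1; have := h 1 0 (-1)
  have := h 0 1 1; have := h 0 1 (-1)
  norm_num at *
  refine ⟨?_, ?_, ?_, ?_, ?_, ?_, ?_, ?_, ?_⟩ <;> linarith

theorem quarticPart_coeffs_eq {r₁ r₂ r₃ a₁₁ a₁₂ a₁₃ a₂₂ a₂₃ a₃₃ b₁₁ b₁₂ b₁₃ b₂₂ b₂₃ b₃₃
      c₁₁ c₁₂ c₁₃ c₂₂ c₂₃ c₃₃ : ℝ}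
    (h : ∀ u v w,
      quarticPart a₁₁ a₁₂ a₁₃ a₂₂ a₂₃ a₃₃ b₁₁ b₁₂ b₁₃ b₂₂ b₂₃ b₃₃ c₁₁ c₁₂ c₁₃ c₂₂ c₂₃ c₃₃ u v w
        = -((u ^ 2 + v ^ 2 + w ^ 2) * (r₁ * u ^ 2 + r₂ * v ^ 2 + r₃ * w ^ 2))) :
    a₁₂ = 0 ∧ a₁₃ = 0 ∧ a₂₃ = 0 ∧ b₁₂ = 0 ∧ b₁₃ = 0 ∧ b₂₃ = 0 ∧
      c₁₂ = 0 ∧ c₁₃ = 0 ∧ c₂₃ = 0 ∧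
      a₁₁ = -r₁ ∧ a₂₂ = -(r₁ + r₂ + b₁₁) ∧ b₂₂ = -r₂ ∧
      b₃₃ = -(r₂ + r₃ + c₂₂) ∧ c₁₁ = -(r₁ + r₃ + a₃₃) ∧ c₃₃ = -r₃ := by
  simp only [quarticPart] at h
  have := h 1 0 0; have := h 0 1 0; have := h 0 0 1
  have := h 1 1 0; have := h 1 (-1) 0; have := h 1 2 0
  have := h 1 0 1; have := h 1 0 (-1); have := h 1 0 2
  have := h 0 1 1; have := h 0 1 (-1); have := h 0 1 2
  have := h 1 1 1; have := h (-1) 1 1; have := h 1 (-1) 1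
  norm_num at *
  refine ⟨?_, ?_, ?_, ?_, ?_, ?_, ?_, ?_, ?_, ?_, ?_, ?_, ?_, ?_, ?_⟩ <;> linarith

lemma eval_quadG (x : Fin 3 → ℝ) (r a₁ a₂ a₃ a₁₁ a₁₂ a₁₃ a₂₂ a₂₃ a₃₃ : ℝ) :
    eval x (quadG r a₁ a₂ a₃ a₁₁ a₁₂ a₁₃ a₂₂ a₂₃ a₃₃) =
      r + a₁ * x 0 + a₂ * x 1 + a₃ * x 2 + a₁₁ * x 0 ^ 2 + a₁₂ * x 0 * x 1 + a₁₃ * x 0 * x 2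
        + a₂₂ * x 1 ^ 2 + a₂₃ * x 1 * x 2 + a₃₃ * x 2 ^ 2 := by
  simp [quadG]

lemma unitSphere_poly_ne_zero : (X 0 ^ 2 + X 1 ^ 2 + X 2 ^ 2 - 1 : MvPolynomial (Fin 3) ℝ) ≠ 0 :=
  fun h ↦ by simpa using congrArg (eval 0) h

lemma EuclideanSpace.norm_sq_eq_fin_three (x : EuclideanSpace ℝ (Fin 3)) :
    ‖x‖ ^ 2 = x 0 ^ 2 + x 1 ^ 2 + x 2 ^ 2 := by
  rw [EuclideanSpace.real_norm_sq_eq, Fin.sum_univ_three]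

namespace sphereInvariance

variable {G₁ G₂ G₃ K : MvPolynomial (Fin 3) ℝ}

lemma cofactor_unique {K' : MvPolynomial (Fin 3) ℝ} (h : sphereInvariance G₁ G₂ G₃ K)
    (h' : sphereInvariance G₁ G₂ G₃ K') : K = K' :=
  mul_left_cancel₀ unitSphere_poly_ne_zero (h.symm.trans h')

lemma eval_eq_zero (h : sphereInvariance G₁ G₂ G₃ K) (x : Fin 3 → ℝ)
    (hx : x 0 ^ 2 + x 1 ^ 2 + x 2 ^ 2 = 1) :
    x 0 ^ 2 * eval x G₁ + x 1 ^ 2 * eval x G₂ + x 2 ^ 2 * eval x G₃ = 0 := by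
  have := congrArg (eval x) h
  simp only [map_add, map_sub, map_mul, map_pow, map_one, map_ofNat, eval_X, hx] at this
  linear_combination this / 2

end sphereInvariance

theorem coefficients_of_sphereInvariance {r₁ r₂ r₃ a₁ a₂ a₃ a₁₁ a₁₂ a₁₃ a₂₂ a₂₃ a₃₃
      b₁ b₂ b₃ b₁₁ b₁₂ b₁₃ b₂₂ b₂₃ b₃₃ c₁ c₂ c₃ c₁₁ c₁₂ c₁₃ c₂₂ c₂₃ c₃₃ : ℝ}
    {K : MvPolynomial (Fin 3) ℝ}
    (h : sphereInvariance (quadG r₁ a₁ a₂ a₃ a₁₁ a₁₂ a₁₃ a₂₂ a₂₃ a₃₃)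
      (quadG r₂ b₁ b₂ b₃ b₁₁ b₁₂ b₁₃ b₂₂ b₂₃ b₃₃) (quadG r₃ c₁ c₂ c₃ c₁₁ c₁₂ c₁₃ c₂₂ c₂₃ c₃₃) K) :
    a₁ = 0 ∧ a₂ = 0 ∧ a₃ = 0 ∧ b₁ = 0 ∧ b₂ = 0 ∧ b₃ = 0 ∧
      c₁ = 0 ∧ c₂ = 0 ∧ c₃ = 0 ∧
      a₁₂ = 0 ∧ a₁₃ = 0 ∧ a₂₃ = 0 ∧ b₁₂ = 0 ∧ b₁₃ = 0 ∧ b₂₃ = 0 ∧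
      c₁₂ = 0 ∧ c₁₃ = 0 ∧ c₂₃ = 0 ∧
      a₁₁ = -r₁ ∧ a₂₂ = -(r₁ + r₂ + b₁₁) ∧ b₂₂ = -r₂ ∧
      b₃₃ = -(r₂ + r₃ + c₂₂) ∧ c₁₁ = -(r₁ + r₃ + a₃₃) ∧ c₃₃ = -r₃ := by
  obtain ⟨h₃, h₄⟩ := eq_zero_and_eq_of_sum_eq_zero_on_unit_sphere (E := EuclideanSpace ℝ (Fin 3))
    (p₂ := fun x ↦ r₁ * x 0 ^ 2 + r₂ * x 1 ^ 2 + r₃ * x 2 ^ 2)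
    (p₃ := fun x ↦ cubicPart a₁ a₂ a₃ b₁ b₂ b₃ c₁ c₂ c₃ (x 0) (x 1) (x 2))
    (p₄ := fun x ↦ quarticPart a₁₁ a₁₂ a₁₃ a₂₂ a₂₃ a₃₃ b₁₁ b₁₂ b₁₃ b₂₂ b₂₃ b₃₃
      c₁₁ c₁₂ c₁₃ c₂₂ c₂₃ c₃₃ (x 0) (x 1) (x 2))
    (fun t x ↦ by simp only [PiLp.smul_apply, smul_eq_mul]; ring)
    (fun t x ↦ by simp only [cubicPart, PiLp.smul_apply, smul_eq_mul]; ring)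
    (fun t x ↦ by simp only [quarticPart, PiLp.smul_apply, smul_eq_mul]; ring)
    (fun x hx ↦ by
      have := h.eval_eq_zero x (by rw [← EuclideanSpace.norm_sq_eq_fin_three, hx, one_pow])
      simp only [eval_quadG] at this
      simp only [cubicPart, quarticPart]
      linear_combination this)
  obtain ⟨ha₁, ha₂, ha₃, hb₁, hb₂, hb₃, hc₁, hc₂, hc₃⟩ :=
    cubicPart_coeffs_eq_zero fun u v w ↦ by simpa using congrFun h₃ !₂[u, v, w]
  refine ⟨ha₁, ha₂, ha₃, hb₁, hb₂, hb₃, hc₁, hc₂, hc₃, quarticPart_coeffs_eq fun u v w ↦ ?_⟩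
  simpa [EuclideanSpace.norm_sq_eq_fin_three] using congrFun h₄ !₂[u, v, w]

noncomputable def sphereCofactor (r₁ r₂ r₃ : ℝ) : MvPolynomial (Fin 3) ℝ :=
  -2 * (C r₁ * X 0 ^ 2 + C r₂ * X 1 ^ 2 + C r₃ * X 2 ^ 2)

lemma sphereCofactor_eq_zero_iff {r₁ r₂ r₃ : ℝ} :
    sphereCofactor r₁ r₂ r₃ = 0 ↔ r₁ ^ 2 + r₂ ^ 2 + r₃ ^ 2 = 0 := by
  constructor
  · intro h
    have h₁ : r₁ = 0 := by simpa [sphereCofactor] using congrArg (eval ![1, 0, 0]) h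
    have h₂ : r₂ = 0 := by simpa [sphereCofactor] using congrArg (eval ![0, 1, 0]) h
    have h₃ : r₃ = 0 := by simpa [sphereCofactor] using congrArg (eval ![0, 0, 1]) h
    simp [h₁, h₂, h₃]
  · intro h
    obtain ⟨r₁_eq, r₂_eq, r₃_eq⟩ : r₁ = 0 ∧ r₂ = 0 ∧ r₃ = 0 := by
      refine ⟨?_, ?_, ?_⟩ <;> nlinarith [sq_nonneg r₁, sq_nonneg r₂, sq_nonneg r₃]
    simp [sphereCofactor, r₁_eq, r₂_eq, r₃_eq]

theorem sphereInvariance_sphereCofactor (r₁ r₂ r₃ a₃₃ b₁₁ c₂₂ : ℝ) :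
    sphereInvariance (quadG r₁ 0 0 0 (-r₁) 0 0 (-(r₁ + r₂ + b₁₁)) 0 a₃₃)
      (quadG r₂ 0 0 0 b₁₁ 0 0 (-r₂) 0 (-(r₂ + r₃ + c₂₂)))
      (quadG r₃ 0 0 0 (-(r₁ + r₃ + a₃₃)) 0 0 c₂₂ 0 (-r₃)) (sphereCofactor r₁ r₂ r₃) := by
  simp only [sphereInvariance, quadG, sphereCofactor, map_neg, map_add, map_zero]
  ring

/-- The cubic Kolmogorov system `ẋᵢ = xᵢGᵢ` with general quadratic `Gᵢ`'s admits the unit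
sphere as an *isolated* invariant surface (nonzero cofactor `K`) iff `r₁²+r₂²+r₃² ≠ 0` and
the coefficients satisfy the stated conditions. -/
theorem isolated_invariant_sphere_iff (r₁ r₂ r₃ a₁ a₂ a₃ a₁₁ a₁₂ a₁₃ a₂₂ a₂₃ a₃₃ b₁ b₂ b₃ b₁₁ b₁₂ b₁₃ b₂₂ b₂₃ b₃₃ c₁ c₂ c₃ c₁₁ c₁₂ c₁₃ c₂₂ c₂₃ c₃₃ : ℝ) :
    (∃ K, K ≠ 0 ∧ sphereInvariance (quadG r₁ a₁ a₂ a₃ a₁₁ a₁₂ a₁₃ a₂₂ a₂₃ a₃₃)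
        (quadG r₂ b₁ b₂ b₃ b₁₁ b₁₂ b₁₃ b₂₂ b₂₃ b₃₃)
        (quadG r₃ c₁ c₂ c₃ c₁₁ c₁₂ c₁₃ c₂₂ c₂₃ c₃₃) K) ↔
      (r₁ ^ 2 + r₂ ^ 2 + r₃ ^ 2 ≠ 0 ∧
      (a₁ = 0 ∧ a₂ = 0 ∧ a₃ = 0 ∧ b₁ = 0 ∧ b₂ = 0 ∧ b₃ = 0 ∧
       c₁ = 0 ∧ c₂ = 0 ∧ c₃ = 0 ∧
       a₁₂ = 0 ∧ a₁₃ = 0 ∧ a₂₃ = 0 ∧ b₁₂ = 0 ∧ b₁₃ = 0 ∧ b₂₃ = 0 ∧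
       c₁₂ = 0 ∧ c₁₃ = 0 ∧ c₂₃ = 0 ∧
       a₁₁ = -r₁ ∧ a₂₂ = -(r₁ + r₂ + b₁₁) ∧ b₂₂ = -r₂ ∧
       b₃₃ = -(r₂ + r₃ + c₂₂) ∧ c₁₁ = -(r₁ + r₃ + a₃₃) ∧ c₃₃ = -r₃)) := by
  constructor
  · rintro ⟨K, hK, h⟩
    have hcoeff := coefficients_of_sphereInvariance h
    refine ⟨?_, hcoeff⟩
    obtain ⟨rfl, rfl, rfl, rfl, rfl, rfl, rfl, rfl, rfl, rfl, rfl, rfl, rfl, rfl, rfl, rfl, rfl,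
      rfl, rfl, rfl, rfl, rfl, rfl, rfl⟩ := hcoeff
    rw [h.cofactor_unique (sphereInvariance_sphereCofactor ..)] at hK
    exact sphereCofactor_eq_zero_iff.not.mp hK
  · rintro ⟨hr, rfl, rfl, rfl, rfl, rfl, rfl, rfl, rfl, rfl, rfl, rfl, rfl, rfl, rfl, rfl, rfl,
      rfl, rfl, rfl, rfl, rfl, rfl, rfl, rfl⟩
    exact ⟨_, sphereCofactor_eq_zero_iff.not.mpr hr, sphereInvariance_sphereCofactor ..⟩
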